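/- (Proposition 5.3) Let X and Y be compact metric spaces, K a finite simplicial complex in ℝⁿ and L a finite simplicial complex in ℝᵐ, and τ_K : X ≃ₜ K.space and τ_L : Y ≃ₜ L.space homeomorphisms (the spaces carrying the subspace topologies). Let g : X → Y be continuous and ε > 0. Then there exist a subdivision K' of K, a subdivision L' of L, and a simplicial map F from K' to L' such that for every x ∈ X, dist(g(x), τ_L.symm (F (τ_K x))) ≤ ε. -/

import Mathlib

/-!
Iterated barycentric subdivision makes the mesh of a finite complex in `ℝⁿ` arbitrarily small, since
a face of the barycentric subdivision has diameter at most `n / (n + 1)` times the mesh.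
Transport `g` to `φ = τL ∘ g ∘ τK⁻¹ : |K| → ℝᵐ`. Subdivide `L` to `L'` of mesh at most `δ`, take a
Lebesgue number `r` for the cover of the compact space `|K|` by the preimages under `φ` of the open
stars of `L'`, and subdivide `K` to `K'` of mesh below `r`. Sending each vertex `v` of `K'` to a
vertex of `L'` whose open star contains `φ (ball v r)` maps every face `σ` of `K'` into each face of
`L'` that carries `φ p` for some `p ∈ σ`; hence the affine extension `Φ` is simplicial and `Φ p`,
`φ p` lie in a common face of `L'`, so they are `δ`-close. Uniform continuity of `τL⁻¹` on the
compact space `|L|` converts this into the `ε`-estimate.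
-/

open Geometry

/-- K' is a subdivision of K: same underlying space and every face of K' is, up to
convex hulls, contained in a face of K. -/
def IsSubdivision {n : ℕ} (K' K : SimplicialComplex ℝ (Fin n → ℝ)) : Prop :=
  K'.space = K.space ∧
  ∀ σ ∈ K'.faces, ∃ τ ∈ K.faces,
    convexHull ℝ (σ : Set (Fin n → ℝ)) ⊆ convexHull ℝ (τ : Set (Fin n → ℝ))

/-- A simplicial map from K to L: affine on (the convex hull of) each face of K, sending
vertices of K to vertices of L, and each face of K into some face of L. -/
def IsSimplicialMap {n m : ℕ} (K : SimplicialComplex ℝ (Fin n → ℝ))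
    (L : SimplicialComplex ℝ (Fin m → ℝ)) (F : (Fin n → ℝ) → (Fin m → ℝ)) : Prop :=
  (∀ σ ∈ K.faces, ∃ A : (Fin n → ℝ) →ᵃ[ℝ] (Fin m → ℝ),
      ∀ x ∈ convexHull ℝ (σ : Set (Fin n → ℝ)), F x = A x) ∧
  (∀ v ∈ K.vertices, F v ∈ L.vertices) ∧
  (∀ σ ∈ K.faces, ∃ μ ∈ L.faces,
      F '' convexHull ℝ (σ : Set (Fin n → ℝ)) ⊆ convexHull ℝ (μ : Set (Fin m → ℝ)))

open Finset Metric

theorem LinearIndependent.exists_linearMap_eq {K V W ι : Type*} [DivisionRing K] [AddCommGroup V]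
    [Module K V] [AddCommGroup W] [Module K W] {v : ι → V} (hv : LinearIndependent K v)
    (f : ι → W) : ∃ T : V →ₗ[K] W, ∀ i, T (v i) = f i := by
  obtain ⟨T, hT⟩ := LinearMap.exists_extend (Finsupp.linearCombination K f ∘ₗ hv.repr)
  refine ⟨T, fun i => ?_⟩
  have := LinearMap.congr_fun hT ⟨v i, Submodule.subset_span (Set.mem_range_self i)⟩
  simpa [hv.repr_eq_single i ⟨v i, _⟩ rfl] using this

theorem AffineIndependent.exists_affineMap_eq {k V W ι : Type*} [DivisionRing k] [AddCommGroup V]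
    [Module k V] [AddCommGroup W] [Module k W] {p : ι → V} (hp : AffineIndependent k p)
    (f : ι → W) : ∃ A : V →ᵃ[k] W, ∀ i, A (p i) = f i := by
  rcases isEmpty_or_nonempty ι with hι | ⟨⟨i₀⟩⟩
  · exact ⟨AffineMap.const k V 0, fun i => hι.elim i⟩
  obtain ⟨T, hT⟩ := ((affineIndependent_iff_linearIndependent_vsub k p i₀).1 hp).exists_linearMap_eq
    fun i => f i - f i₀
  refine ⟨T.toAffineMap + AffineMap.const k V (f i₀ - T (p i₀)), fun i => ?_⟩
  rcases eq_or_ne i i₀ with rfl | hi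
  · simp
  · have := hT ⟨i, hi⟩
    simp only [vsub_eq_sub, map_sub] at this
    simp only [AffineMap.coe_add, Pi.add_apply, LinearMap.coe_toAffineMap, AffineMap.const_apply]
    rw [← sub_add_cancel (T (p i)) (T (p i₀)), this]
    abel

theorem AffineMap.eqOn_convexHull {E F : Type*} [AddCommGroup E] [Module ℝ E] [AddCommGroup F]
    [Module ℝ F] {A B : E →ᵃ[ℝ] F} {s : Set E} (h : Set.EqOn A B s) :
    Set.EqOn A B (convexHull ℝ s) :=
  convexHull_min h (by
    simpa [Set.preimage, sub_eq_zero] using (convex_singleton (0 : F)).affine_preimage (A - B) :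
      Convex ℝ {x | A x = B x})

theorem Finset.centroid_id_eq {E : Type*} [AddCommGroup E] [Module ℝ E] {A : Finset E}
    (hA : A.Nonempty) : A.centroid ℝ id = (#A : ℝ)⁻¹ • ∑ v ∈ A, v := by
  rw [centroid_eq_centerMass _ hA, centerMass, sum_centroidWeights_eq_one_of_nonempty ℝ _ hA]
  simp [smul_sum]

section AffineIndependent

variable {k V ι : Type*} [Ring k] [AddCommGroup V] [Module k V] {p : ι → V} {s : Finset ι}

theorem affineIndependent_of_forall_sum_eq_zero
    (h : ∀ w : ι → k, ∑ i ∈ s, w i = 0 → ∑ i ∈ s, w i • p i = 0 → ∀ i ∈ s, w i = 0) :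
    AffineIndependent k (fun i : s => p i) := by
  classical
  rw [affineIndependent_iff]
  intro t w h0 h1 i hi
  let W : ι → k := fun j => if hj : j ∈ s then (if ⟨j, hj⟩ ∈ t then w ⟨j, hj⟩ else 0) else 0
  have hW : ∀ j : s, W j = if j ∈ t then w j else 0 := fun j => dif_pos j.2
  have := h W
    (by rw [← sum_coe_sort, sum_congr rfl fun j _ => hW j, sum_ite_mem, univ_inter, h0])
    (by simp_rw [← sum_coe_sort s, hW, ite_smul, zero_smul]
        rw [sum_ite_mem, univ_inter, h1]) i i.2
  simpa [hW, hi] using this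

theorem AffineIndependent.finset_image [DecidableEq V]
    (h : AffineIndependent k (fun i : s => p i)) : AffineIndependent k ((↑) : s.image p → V) := by
  have := h.range
  rwa [show Set.range (fun i : s => p i) = ↑(s.image p) by
    rw [coe_image, Set.image_eq_range]; rfl] at this

end AffineIndependent

/-! ### Chains of finite sets -/

section Chain

variable {α : Type*} {c : Finset (Finset α)}

theorem IsChain.exists_forall_subset (hc : IsChain (· ⊆ ·) (c : Set (Finset α)))
    (hne : c.Nonempty) : ∃ M ∈ c, ∀ A ∈ c, A ⊆ M := by
  obtain ⟨M, hM, hmax⟩ := exists_maximal hne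
  exact ⟨M, hM, fun A hA => (hc.total hA hM).elim id (hmax hA)⟩

theorem IsChain.exists_forall_superset (hc : IsChain (· ⊆ ·) (c : Set (Finset α)))
    (hne : c.Nonempty) : ∃ M ∈ c, ∀ A ∈ c, M ⊆ A := by
  obtain ⟨M, hM, hmin⟩ := exists_minimal hne
  exact ⟨M, hM, fun A hA => (hc.total hA hM).elim (hmin hA) id⟩

theorem IsChain.exists_mem_iff_subset [DecidableEq α] (hc : IsChain (· ⊆ ·) (c : Set (Finset α)))
    {A : Finset α} (hA : A ∈ c) (hAne : A.Nonempty) : ∃ v ∈ A, ∀ B ∈ c, v ∈ B ↔ A ⊆ B := by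
  obtain ⟨v, hvA, hv⟩ : ∃ v ∈ A, ∀ B ∈ c, B ⊂ A → v ∉ B := by
    rcases (c.filter (· ⊂ A)).eq_empty_or_nonempty with h | h
    · obtain ⟨v, hv⟩ := hAne
      exact ⟨v, hv, fun B hB hBA => absurd (mem_filter.2 ⟨hB, hBA⟩) (h ▸ notMem_empty B)⟩
    · obtain ⟨M, hM, hMmax⟩ := (hc.mono (coe_subset.2 (filter_subset _ c))).exists_forall_subset h
      obtain ⟨v, hvA, hvM⟩ := exists_of_ssubset (mem_filter.1 hM).2
      exact ⟨v, hvA, fun B hB hBA hvB => hvM (hMmax B (mem_filter.2 ⟨hB, hBA⟩) hvB)⟩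
  refine ⟨v, hvA, fun B hB => ⟨fun hvB => ?_, fun h => h hvA⟩⟩
  rcases hc.total hA hB with h | h
  · exact h
  · obtain rfl | h := h.eq_or_ssubset
    · exact subset_rfl
    · exact absurd hvB (hv B hB h)

end Chain

section ChainWeight

variable {E : Type*} [DecidableEq E]

/-- `chainWeight c w {v}` is the barycentric coordinate at `v` of `∑ A ∈ c, w A • A.centroid ℝ id`.
For a chain `c` and nonnegative weights, the members `A` of `c` with `w A ≠ 0` are exactly the
superlevel sets of these coordinates, at the levels `chainWeight c w A`. -/
noncomputable def chainWeight (c : Finset (Finset E)) (w : Finset E → ℝ) (A : Finset E) : ℝ :=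
  ∑ B ∈ c with A ⊆ B, w B / #B

variable {c : Finset (Finset E)} {w : Finset E → ℝ}

theorem sum_chainWeight_singleton {V : Finset E} (hcV : ∀ A ∈ c, A ⊆ V)
    (hne : ∀ A ∈ c, A.Nonempty) : ∑ v ∈ V, chainWeight c w {v} = ∑ A ∈ c, w A := by
  simp only [chainWeight, singleton_subset_iff, sum_filter]
  rw [sum_comm]
  refine sum_congr rfl fun A hA => ?_
  rw [← sum_filter, filter_mem_eq_inter, inter_eq_right.2 (hcV A hA), sum_const, nsmul_eq_mul,
    mul_div_cancel₀ _ (Nat.cast_ne_zero.2 (hne A hA).card_ne_zero)]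

theorem sum_chainWeight_singleton_smul [AddCommGroup E] [Module ℝ E] {V : Finset E}
    (hcV : ∀ A ∈ c, A ⊆ V) (hne : ∀ A ∈ c, A.Nonempty) :
    ∑ v ∈ V, chainWeight c w {v} • v = ∑ A ∈ c, w A • A.centroid ℝ id := by
  simp only [chainWeight, singleton_subset_iff, sum_filter, sum_smul, ite_smul, zero_smul]
  rw [sum_comm]
  refine sum_congr rfl fun A hA => ?_
  rw [← sum_filter, filter_mem_eq_inter, inter_eq_right.2 (hcV A hA), centroid_id_eq (hne A hA),
    smul_smul, smul_sum, div_eq_mul_inv]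

theorem chainWeight_singleton_eq_zero {V : Finset E} (hcV : ∀ A ∈ c, A ⊆ V) {v : E}
    (hv : v ∉ V) : chainWeight c w {v} = 0 :=
  sum_eq_zero fun B hB =>
    absurd (hcV B (mem_filter.1 hB).1 (singleton_subset_iff.1 (mem_filter.1 hB).2)) hv

section Nonneg

variable (hw : ∀ A ∈ c, 0 ≤ w A)
include hw

theorem chainWeight_nonneg (A : Finset E) : 0 ≤ chainWeight c w A :=
  sum_nonneg fun B hB => div_nonneg (hw B (mem_filter.1 hB).1) (Nat.cast_nonneg _)

theorem chainWeight_anti {A A' : Finset E} (h : A ⊆ A') :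
    chainWeight c w A' ≤ chainWeight c w A :=
  sum_le_sum_of_subset_of_nonneg (monotone_filter_right _ fun _ _ => h.trans)
    fun B hB _ => div_nonneg (hw B (mem_filter.1 hB).1) (Nat.cast_nonneg _)

theorem div_card_le_chainWeight {A : Finset E} (hA : A ∈ c) : w A / #A ≤ chainWeight c w A :=
  single_le_sum (f := fun B => w B / #B)
    (fun B hB => div_nonneg (hw B (mem_filter.1 hB).1) (Nat.cast_nonneg _))
    (mem_filter.2 ⟨hA, subset_rfl⟩)

end Nonneg

end ChainWeight

section ChainWeightChain

variable {E : Type*} [DecidableEq E] {c : Finset (Finset E)} {w : Finset E → ℝ}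
  (hc : IsChain (· ⊆ ·) (c : Set (Finset E)))
include hc

theorem IsChain.exists_chainWeight_singleton_eq {A : Finset E} (hA : A ∈ c) (hAne : A.Nonempty) :
    ∃ v ∈ A, chainWeight c w {v} = chainWeight c w A := by
  obtain ⟨v, hvA, hv⟩ := hc.exists_mem_iff_subset hA hAne
  refine ⟨v, hvA, sum_congr (filter_congr fun B hB => ?_) fun _ _ => rfl⟩
  rw [singleton_subset_iff, hv B hB]

theorem IsChain.eq_zero_of_chainWeight_singleton_eq_zero (hne : ∀ A ∈ c, A.Nonempty)
    (h : ∀ v, chainWeight c w {v} = 0) : ∀ A ∈ c, w A = 0 := by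
  by_contra! hw
  obtain ⟨A, hA, hmax⟩ := exists_maximal (s := c.filter (w · ≠ 0)) (by simpa [Finset.Nonempty])
  obtain ⟨hAc, hwA⟩ := mem_filter.1 hA
  obtain ⟨v, -, hv⟩ := hc.exists_chainWeight_singleton_eq (w := w) hAc (hne A hAc)
  have htop : chainWeight c w A = w A / #A := by
    refine sum_eq_single_of_mem A (mem_filter.2 ⟨hAc, subset_rfl⟩) fun B hB hBA => ?_
    obtain ⟨hBc, hAB⟩ := mem_filter.1 hB
    by_contra hwB
    exact hBA (subset_antisymm (hmax (mem_filter.2 ⟨hBc, left_ne_zero_of_mul hwB⟩) hAB) hAB)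
  rw [h v, htop, eq_comm, div_eq_zero_iff, Nat.cast_eq_zero] at hv
  exact hv.elim hwA (hne A hAc).card_ne_zero

theorem IsChain.exists_chainWeight_singleton_eq_of_pos {v : E} (hv : 0 < chainWeight c w {v}) :
    ∃ A ∈ c, w A ≠ 0 ∧ chainWeight c w {v} = chainWeight c w A := by
  obtain ⟨A, hA, hmin⟩ := (hc.mono (coe_subset.2 (filter_subset _ c))).exists_forall_superset
    (c := c.filter (fun B => v ∈ B ∧ w B ≠ 0)) (by
      by_contra h
      refine hv.ne' (sum_eq_zero fun B hB => ?_)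
      by_contra hB'
      obtain ⟨hBc, hvB⟩ := mem_filter.1 hB
      exact h ⟨B, mem_filter.2 ⟨hBc, singleton_subset_iff.1 hvB, left_ne_zero_of_mul hB'⟩⟩)
  obtain ⟨hAc, hvA, hwA⟩ := mem_filter.1 hA
  refine ⟨A, hAc, hwA, ?_⟩
  simp only [chainWeight, sum_filter]
  refine sum_congr rfl fun B hB => ?_
  by_cases hwB : w B = 0
  · simp [hwB]
  · refine if_congr ?_ rfl rfl
    rw [singleton_subset_iff]
    exact ⟨fun hvB => hmin B (mem_filter.2 ⟨hB, hvB, hwB⟩), fun hAB => hAB hvA⟩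

variable (hw : ∀ A ∈ c, 0 ≤ w A)
include hw

theorem IsChain.chainWeight_singleton_lt {A : Finset E} (hA : A ∈ c) (hAne : A.Nonempty)
    (hwA : w A ≠ 0) {v : E} (hv : v ∉ A) : chainWeight c w {v} < chainWeight c w A := by
  have hsub : c.filter ({v} ⊆ ·) ⊆ (c.filter (A ⊆ ·)).erase A := by
    intro B hB
    obtain ⟨hBc, hvB⟩ := mem_filter.1 hB
    rw [singleton_subset_iff] at hvB
    refine mem_erase.2 ⟨fun hBA => hv (hBA ▸ hvB), mem_filter.2 ⟨hBc, ?_⟩⟩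
    exact (hc.total hA hBc).resolve_right fun hBA => hv (hBA hvB)
  have hpos : 0 < w A / #A := div_pos ((hw A hA).lt_of_ne' hwA) (by exact_mod_cast hAne.card_pos)
  calc chainWeight c w {v} ≤ ∑ B ∈ (c.filter (A ⊆ ·)).erase A, w B / #B :=
        sum_le_sum_of_subset_of_nonneg hsub fun B hB _ =>
          div_nonneg (hw B (mem_filter.1 (mem_of_mem_erase hB)).1) (Nat.cast_nonneg _)
    _ < ∑ B ∈ (c.filter (A ⊆ ·)).erase A, w B / #B + w A / #A := lt_add_of_pos_right _ hpos
    _ = chainWeight c w A := sum_erase_add _ _ (mem_filter.2 ⟨hA, subset_rfl⟩)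

theorem IsChain.mem_iff_chainWeight_le {A : Finset E} (hA : A ∈ c) (hAne : A.Nonempty)
    (hwA : w A ≠ 0) (u : E) : u ∈ A ↔ chainWeight c w A ≤ chainWeight c w {u} :=
  ⟨fun hu => chainWeight_anti hw (singleton_subset_iff.2 hu), fun h => by
    by_contra hu
    exact (hc.chainWeight_singleton_lt hw hA hAne hwA hu).not_ge h⟩

end ChainWeightChain

theorem IsChain.mem_of_chainWeight_eq {E : Type*} [DecidableEq E] {c c' : Finset (Finset E)}
    {w w' : Finset E → ℝ} (hc : IsChain (· ⊆ ·) (c : Set (Finset E)))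
    (hc' : IsChain (· ⊆ ·) (c' : Set (Finset E))) (hne : ∀ A ∈ c, A.Nonempty)
    (hne' : ∀ A ∈ c', A.Nonempty) (hw : ∀ A ∈ c, 0 ≤ w A) (hw' : ∀ A ∈ c', 0 ≤ w' A)
    (h : ∀ v, chainWeight c w {v} = chainWeight c' w' {v}) {A : Finset E} (hA : A ∈ c)
    (hwA : w A ≠ 0) : A ∈ c' := by
  obtain ⟨v, -, hv⟩ := hc.exists_chainWeight_singleton_eq (w := w) hA (hne A hA)
  have hpos : 0 < chainWeight c' w' {v} := by
    rw [← h, hv]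
    exact (div_pos ((hw A hA).lt_of_ne' hwA) (by exact_mod_cast (hne A hA).card_pos)).trans_le
      (div_card_le_chainWeight hw hA)
  obtain ⟨A', hA', hwA', hv'⟩ := hc'.exists_chainWeight_singleton_eq_of_pos hpos
  convert hA'
  ext u
  rw [hc.mem_iff_chainWeight_le hw hA (hne A hA) hwA, hc'.mem_iff_chainWeight_le hw' hA'
    (hne' A' hA') hwA', ← hv, ← hv', h, h]

theorem IsChain.affineIndependent_centroid {E : Type*} [AddCommGroup E] [Module ℝ E]
    {c : Finset (Finset E)} (hc : IsChain (· ⊆ ·) (c : Set (Finset E)))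
    (hne : ∀ A ∈ c, A.Nonempty) {V : Finset E} (hV : AffineIndependent ℝ ((↑) : V → E))
    (hcV : ∀ A ∈ c, A ⊆ V) : AffineIndependent ℝ (fun A : c => (A : Finset E).centroid ℝ id) := by
  classical
  refine affineIndependent_of_forall_sum_eq_zero (p := fun A : Finset E => A.centroid ℝ id)
    fun w h0 h1 => ?_
  have hV0 := hV.eq_zero_of_sum_eq_zero_subtype (w := fun v => chainWeight c w {v})
    (by rw [sum_chainWeight_singleton hcV hne, h0])
    (by rw [sum_chainWeight_singleton_smul hcV hne, h1])
  refine hc.eq_zero_of_chainWeight_singleton_eq_zero hne fun v => ?_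
  by_cases hv : v ∈ V
  · exact hV0 v hv
  · exact chainWeight_singleton_eq_zero hcV hv

/-! ### Barycentric subdivision -/

theorem Finset.sum_smul_eq_smul_centroid_add {E : Type*} [AddCommGroup E] [Module ℝ E]
    [DecidableEq E] {σ : Finset E} {v₀ : E} (hv₀ : v₀ ∈ σ) (t : E → ℝ) :
    ∑ v ∈ σ, t v • v =
      (t v₀ * #σ) • σ.centroid ℝ id + ∑ v ∈ σ.erase v₀, (t v - t v₀) • v := by
  have hcard : (#σ : ℝ) ≠ 0 := Nat.cast_ne_zero.2 (card_ne_zero_of_mem hv₀)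
  rw [sum_erase _ (by rw [sub_self, zero_smul]), centroid_id_eq ⟨v₀, hv₀⟩, smul_smul, mul_assoc,
    mul_inv_cancel₀ hcard, mul_one, smul_sum, ← sum_add_distrib]
  exact sum_congr rfl fun v _ => by rw [← add_smul, add_sub_cancel]

theorem exists_isChain_mem_convexHull_centroid {E : Type*} [AddCommGroup E] [Module ℝ E]
    [DecidableEq E] {σ : Finset E} {x : E} (hx : x ∈ convexHull ℝ (σ : Set E)) :
    ∃ c : Finset (Finset E), c.Nonempty ∧ IsChain (· ⊆ ·) (c : Set (Finset E)) ∧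
      (∀ A ∈ c, A.Nonempty ∧ A ⊆ σ) ∧ x ∈ convexHull ℝ ↑(c.image (Finset.centroid ℝ · id)) := by
  induction σ using Finset.strongInduction generalizing x with
  | H σ ih =>
  obtain ⟨t, ht₀, ht₁, rfl⟩ := mem_convexHull'.1 hx
  have hσ : σ.Nonempty := nonempty_of_sum_ne_zero (ht₁ ▸ one_ne_zero)
  obtain ⟨v₀, hv₀, hmin⟩ := σ.exists_min_image t hσ
  rw [sum_smul_eq_smul_centroid_add hv₀]
  set α := t v₀ * #σ
  have hres₀ : ∀ v ∈ σ.erase v₀, 0 ≤ t v - t v₀ :=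
    fun v hv => sub_nonneg.2 (hmin v (mem_of_mem_erase hv))
  have hres₁ : ∑ v ∈ σ.erase v₀, (t v - t v₀) = 1 - α := by
    rw [sum_erase _ (sub_self _), sum_sub_distrib, ht₁, sum_const, nsmul_eq_mul, mul_comm]
  rcases (sub_nonneg.1 (hres₁ ▸ sum_nonneg hres₀)).eq_or_lt with hα | hα
  · refine ⟨{σ}, singleton_nonempty σ, Set.Subsingleton.isChain (by simp), by simpa using hσ, ?_⟩
    have hzero := (sum_eq_zero_iff_of_nonneg hres₀).1 (by rw [hres₁, hα, sub_self])
    rw [hα, one_smul, sum_eq_zero fun v hv => by rw [hzero v hv, zero_smul], add_zero]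
    exact subset_convexHull ℝ _ (by simp)
  -- otherwise the point lies between the centroid of `σ` and a point of the facet `σ.erase v₀`
  have hβ : 0 < 1 - α := sub_pos.2 hα
  obtain ⟨c, hcne, hc, hcσ, hy⟩ := ih (σ.erase v₀) (erase_ssubset hv₀)
    (x := ∑ v ∈ σ.erase v₀, ((t v - t v₀) / (1 - α)) • v) (mem_convexHull'.2
      ⟨_, fun v hv => div_nonneg (hres₀ v hv) hβ.le,
        by rw [← sum_div, hres₁, div_self hβ.ne'], rfl⟩)
  have hx : ∑ v ∈ σ.erase v₀, (t v - t v₀) • v =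
      (1 - α) • ∑ v ∈ σ.erase v₀, ((t v - t v₀) / (1 - α)) • v := by
    rw [smul_sum]
    exact sum_congr rfl fun v _ => by rw [smul_smul, mul_div_cancel₀ _ hβ.ne']
  refine ⟨insert σ c, insert_nonempty σ c, ?_, fun A hA => ?_, ?_⟩
  · rw [coe_insert]
    exact hc.insert fun B hB _ => Or.inr ((hcσ B hB).2.trans (erase_subset v₀ σ))
  · rcases mem_insert.1 hA with rfl | hA
    · exact ⟨hσ, subset_rfl⟩
    · exact ⟨(hcσ A hA).1, (hcσ A hA).2.trans (erase_subset v₀ σ)⟩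
  · rw [hx]
    exact convex_convexHull ℝ _ (subset_convexHull ℝ _ (by simp))
      (convexHull_mono (coe_subset.2 (image_subset_image (subset_insert σ c))) hy)
      (mul_nonneg (ht₀ v₀ hv₀) (Nat.cast_nonneg _)) hβ.le (add_sub_cancel α 1)

namespace Geometry.SimplicialComplex

variable {E : Type*} [AddCommGroup E] [Module ℝ E] {K : SimplicialComplex ℝ E}

theorem weights_eq_of_sum_smul_eq {σ τ : Finset E} (hσ : σ ∈ K.faces) (hτ : τ ∈ K.faces)
    {t t' : E → ℝ} (ht : ∀ v ∉ σ, t v = 0) (ht' : ∀ v ∉ τ, t' v = 0)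
    (ht₀ : ∀ v ∈ σ, 0 ≤ t v) (ht₀' : ∀ v ∈ τ, 0 ≤ t' v)
    (ht₁ : ∑ v ∈ σ, t v = 1) (ht₁' : ∑ v ∈ τ, t' v = 1)
    (h : ∑ v ∈ σ, t v • v = ∑ v ∈ τ, t' v • v) : t = t' := by
  classical
  set x := ∑ v ∈ σ, t v • v
  have hx : x ∈ convexHull ℝ ((σ ∩ τ : Finset E) : Set E) := by
    rw [coe_inter]
    exact K.inter_subset_convexHull hσ hτ
      ⟨mem_convexHull'.2 ⟨t, ht₀, ht₁, rfl⟩, mem_convexHull'.2 ⟨t', ht₀', ht₁', h.symm⟩⟩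
  obtain ⟨u, -, hu₁, hux⟩ := mem_convexHull'.1 hx
  have hext : ∀ ρ ∈ K.faces, σ ∩ τ ⊆ ρ → ∀ s : E → ℝ, (∀ v ∉ ρ, s v = 0) →
      ∑ v ∈ ρ, s v = 1 → ∑ v ∈ ρ, s v • v = x → s = fun v => if v ∈ σ ∩ τ then u v else 0 := by
    intro ρ hρ hsub s hs hs₁ hsx
    funext v
    by_cases hv : v ∈ ρ
    · refine (K.indep hρ).eq_of_sum_eq_sum_subtype (w₁ := s)
        (w₂ := fun v => if v ∈ σ ∩ τ then u v else 0) ?_ ?_ v hv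
      · rw [hs₁, sum_ite_mem, inter_eq_right.2 hsub, hu₁]
      · simp_rw [ite_smul, zero_smul]
        rw [hsx, sum_ite_mem, inter_eq_right.2 hsub, hux]
    · rw [hs v hv, if_neg fun h => hv (hsub h)]
  rw [hext σ hσ inter_subset_left t ht ht₁ rfl, hext τ hτ inter_subset_right t' ht' ht₁' h.symm]

variable (K) in
structure IsFlag (c : Finset (Finset E)) : Prop where
  nonempty : c.Nonempty
  subset_faces : (c : Set (Finset E)) ⊆ K.faces
  isChain : IsChain (· ⊆ ·) (c : Set (Finset E))

namespace IsFlag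

section

variable {c : Finset (Finset E)} (hc : K.IsFlag c)
include hc

theorem nonempty_of_mem {A : Finset E} (hA : A ∈ c) : A.Nonempty :=
  K.nonempty_of_mem_faces (hc.subset_faces hA)

theorem exists_top : ∃ M ∈ c, ∀ A ∈ c, A ⊆ M :=
  hc.isChain.exists_forall_subset hc.nonempty

theorem filter {p : Finset E → Prop} [DecidablePred p] (hp : (c.filter p).Nonempty) :
    K.IsFlag (c.filter p) :=
  ⟨hp, (coe_subset.2 (filter_subset p c)).trans hc.subset_faces,
    hc.isChain.mono (coe_subset.2 (filter_subset p c))⟩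

theorem affineIndependent_centroid :
    AffineIndependent ℝ (fun A : c => (A : Finset E).centroid ℝ id) := by
  obtain ⟨M, hM, hMtop⟩ := hc.exists_top
  exact hc.isChain.affineIndependent_centroid (fun A => hc.nonempty_of_mem)
    (K.indep (hc.subset_faces hM)) hMtop

theorem exists_weights_of_mem_convexHull [DecidableEq E] {x : E}
    (hx : x ∈ convexHull ℝ ↑(c.image (Finset.centroid ℝ · id))) :
    ∃ w : Finset E → ℝ, (∀ A ∈ c, 0 ≤ w A) ∧ ∑ A ∈ c, w A = 1 ∧
      ∑ A ∈ c, w A • A.centroid ℝ id = x := by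
  have hinj : Set.InjOn (Finset.centroid ℝ · id) (c : Set (Finset E)) := fun A hA B hB h =>
    congrArg Subtype.val (hc.affineIndependent_centroid.injective (a₁ := ⟨A, hA⟩) (a₂ := ⟨B, hB⟩) h)
  obtain ⟨u, hu0, hu1, hux⟩ := Finset.mem_convexHull'.1 hx
  rw [sum_image hinj] at hu1 hux
  exact ⟨fun A => u (A.centroid ℝ id), fun A hA => hu0 _ (mem_image_of_mem _ hA), hu1, hux⟩

theorem convexHull_subset_top [DecidableEq E] {M : Finset E} (hM : ∀ A ∈ c, A ⊆ M) :
    convexHull ℝ ↑(c.image (Finset.centroid ℝ · id)) ⊆ convexHull ℝ (M : Set E) :=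
  convexHull_min (by
    simp only [coe_image, Set.image_subset_iff]
    exact fun A hA => convexHull_mono (coe_subset.2 (hM A hA))
      (centroid_mem_convexHull A (hc.nonempty_of_mem hA))) (convex_convexHull ℝ _)

end

variable [DecidableEq E] {c₁ c₂ : Finset (Finset E)} {w₁ w₂ : Finset E → ℝ}

theorem chainWeight_singleton_eq (hc₁ : K.IsFlag c₁) (hc₂ : K.IsFlag c₂)
    (hw₁ : ∀ A ∈ c₁, 0 ≤ w₁ A) (hw₂ : ∀ A ∈ c₂, 0 ≤ w₂ A)
    (hw₁' : ∑ A ∈ c₁, w₁ A = 1) (hw₂' : ∑ A ∈ c₂, w₂ A = 1)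
    (h : ∑ A ∈ c₁, w₁ A • A.centroid ℝ id = ∑ A ∈ c₂, w₂ A • A.centroid ℝ id) (v : E) :
    chainWeight c₁ w₁ {v} = chainWeight c₂ w₂ {v} := by
  obtain ⟨M₁, hM₁, hM₁top⟩ := hc₁.exists_top
  obtain ⟨M₂, hM₂, hM₂top⟩ := hc₂.exists_top
  have hne₁ := fun A => hc₁.nonempty_of_mem (A := A)
  have hne₂ := fun A => hc₂.nonempty_of_mem (A := A)
  refine congrFun (K.weights_eq_of_sum_smul_eq (hc₁.subset_faces hM₁) (hc₂.subset_faces hM₂)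
    (fun v => chainWeight_singleton_eq_zero hM₁top) (fun v => chainWeight_singleton_eq_zero hM₂top)
    (fun v _ => chainWeight_nonneg hw₁ _) (fun v _ => chainWeight_nonneg hw₂ _)
    ?_ ?_ ?_) v
  · rw [sum_chainWeight_singleton hM₁top hne₁, hw₁']
  · rw [sum_chainWeight_singleton hM₂top hne₂, hw₂']
  · rw [sum_chainWeight_singleton_smul hM₁top hne₁, sum_chainWeight_singleton_smul hM₂top hne₂, h]

theorem convexHull_inter_subset (hc₁ : K.IsFlag c₁) (hc₂ : K.IsFlag c₂) :
    convexHull ℝ ↑(c₁.image (Finset.centroid ℝ · id)) ∩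
        convexHull ℝ ↑(c₂.image (Finset.centroid ℝ · id)) ⊆
      convexHull ℝ (↑(c₁.image (Finset.centroid ℝ · id)) ∩
        ↑(c₂.image (Finset.centroid ℝ · id)) : Set E) := by
  rintro x ⟨hx₁, hx₂⟩
  obtain ⟨w₁, hw₁, hw₁', rfl⟩ := hc₁.exists_weights_of_mem_convexHull hx₁
  obtain ⟨w₂, hw₂, hw₂', hx⟩ := hc₂.exists_weights_of_mem_convexHull hx₂
  have hsupp : ∀ A ∈ c₁, w₁ A ≠ 0 → A ∈ c₂ := fun A hA hwA =>
    hc₁.isChain.mem_of_chainWeight_eq hc₂.isChain (fun _ => hc₁.nonempty_of_mem)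
      (fun _ => hc₂.nonempty_of_mem) hw₁ hw₂
      (chainWeight_singleton_eq hc₁ hc₂ hw₁ hw₂ hw₁' hw₂' hx.symm) hA hwA
  rw [← sum_filter_of_ne (p := (w₁ · ≠ 0)) fun A _ h => left_ne_zero_of_smul h]
  refine (convex_convexHull ℝ _).sum_mem (fun A hA => hw₁ A (mem_filter.1 hA).1)
    (by rw [sum_filter_ne_zero, hw₁']) fun A hA => subset_convexHull ℝ _ ?_
  obtain ⟨hA, hwA⟩ := mem_filter.1 hA
  exact ⟨mem_image_of_mem _ hA, mem_image_of_mem _ (hsupp A hA hwA)⟩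

end IsFlag

def barycentricSubdivision [DecidableEq E] (K : SimplicialComplex ℝ E) : SimplicialComplex ℝ E where
  faces := {s | ∃ c, K.IsFlag c ∧ c.image (Finset.centroid ℝ · id) = s}
  isRelLowerSet_faces := by
    rintro _ ⟨c, hc, rfl⟩
    refine ⟨hc.nonempty.image _, fun t hts ht =>
      ⟨c.filter (·.centroid ℝ id ∈ t), IsFlag.filter hc ?_, ?_⟩⟩
    · obtain ⟨y, hy⟩ := ht
      obtain ⟨A, hA, rfl⟩ := mem_image.1 (hts hy)
      exact ⟨A, mem_filter.2 ⟨hA, hy⟩⟩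
    · ext y
      simp only [mem_image, mem_filter]
      refine ⟨fun ⟨A, ⟨_, hA⟩, hAy⟩ => hAy ▸ hA, fun hy => ?_⟩
      obtain ⟨A, hA, rfl⟩ := mem_image.1 (hts hy)
      exact ⟨A, ⟨hA, hy⟩, rfl⟩
  indep := by
    rintro _ ⟨c, hc, rfl⟩
    exact (IsFlag.affineIndependent_centroid hc).finset_image
  inter_subset_convexHull := by
    rintro _ _ ⟨c₁, hc₁, rfl⟩ ⟨c₂, hc₂, rfl⟩
    exact IsFlag.convexHull_inter_subset hc₁ hc₂

section

variable [DecidableEq E]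

theorem exists_convexHull_subset_of_mem_barycentricSubdivision {s : Finset E}
    (hs : s ∈ K.barycentricSubdivision.faces) :
    ∃ σ ∈ K.faces, convexHull ℝ (s : Set E) ⊆ convexHull ℝ ↑σ := by
  obtain ⟨c, hc, rfl⟩ := hs
  obtain ⟨M, hM, hMtop⟩ := hc.exists_top
  exact ⟨M, hc.subset_faces hM, hc.convexHull_subset_top hMtop⟩

theorem space_barycentricSubdivision : K.barycentricSubdivision.space = K.space := by
  refine subset_antisymm (fun x hx => ?_) fun x hx => ?_
  · obtain ⟨s, hs, hxs⟩ := mem_space_iff.1 hx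
    obtain ⟨σ, hσ, hsub⟩ := exists_convexHull_subset_of_mem_barycentricSubdivision hs
    exact mem_space_iff.2 ⟨σ, hσ, hsub hxs⟩
  · obtain ⟨σ, hσ, hxσ⟩ := mem_space_iff.1 hx
    obtain ⟨c, hcne, hc, hcσ, hxc⟩ := exists_isChain_mem_convexHull_centroid hxσ
    exact mem_space_iff.2 ⟨_, ⟨c, ⟨hcne, fun A hA => K.down_closed hσ (hcσ A hA).2 (hcσ A hA).1,
      hc⟩, rfl⟩, hxc⟩

theorem finite_barycentricSubdivision_faces (hK : K.faces.Finite) :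
    K.barycentricSubdivision.faces.Finite := by
  refine (hK.toFinset.powerset.image (·.image (Finset.centroid ℝ · id))).finite_toSet.subset ?_
  rintro _ ⟨c, hc, rfl⟩
  exact mem_coe.2 (mem_image_of_mem _
    (mem_powerset.2 fun A hA => hK.mem_toFinset.2 (hc.subset_faces hA)))

end

end Geometry.SimplicialComplex

theorem dist_le_diam_of_mem_convexHull {E : Type*} [NormedAddCommGroup E] [NormedSpace ℝ E]
    {s : Finset E} {x y : E} (hx : x ∈ convexHull ℝ (s : Set E))
    (hy : y ∈ convexHull ℝ (s : Set E)) : dist x y ≤ diam (s : Set E) :=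
  convexHull_diam (s : Set E) ▸
    dist_le_diam_of_mem (s.finite_toSet.isCompact_convexHull (𝕜 := ℝ)).isBounded hx hy

theorem Finset.dist_centroid_le {E : Type*} [NormedAddCommGroup E] [NormedSpace ℝ E]
    {B : Finset E} (hB : B.Nonempty) {p : E}
    (hp : p ∈ convexHull ℝ (B : Set E)) :
    dist p (B.centroid ℝ id) ≤ (1 - (#B : ℝ)⁻¹) * diam (B : Set E) := by
  classical
  have hcard : (#B : ℝ) ≠ 0 := Nat.cast_ne_zero.2 hB.card_ne_zero
  refine convexHull_min (fun v hv => ?_) (convex_closedBall _ _) hp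
  rw [mem_closedBall, dist_eq_norm, centroid_id_eq hB]
  have hv' : v - (#B : ℝ)⁻¹ • ∑ u ∈ B, u = (#B : ℝ)⁻¹ • ∑ u ∈ B.erase v, (v - u) := by
    rw [sum_erase _ (sub_self v), sum_sub_distrib, sum_const, ← Nat.cast_smul_eq_nsmul ℝ,
      smul_sub, smul_smul, inv_mul_cancel₀ hcard, one_smul]
  calc ‖v - (#B : ℝ)⁻¹ • ∑ u ∈ B, u‖ ≤ (#B : ℝ)⁻¹ * ∑ u ∈ B.erase v, ‖v - u‖ := by
        rw [hv', norm_smul, Real.norm_of_nonneg (by positivity)]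
        gcongr
        exact norm_sum_le _ _
    _ ≤ (#B : ℝ)⁻¹ * ∑ u ∈ B.erase v, diam (B : Set E) := by
        gcongr with u hu
        rw [← dist_eq_norm]
        exact dist_le_diam_of_mem B.finite_toSet.isBounded hv (mem_of_mem_erase hu)
    _ = (1 - (#B : ℝ)⁻¹) * diam (B : Set E) := by
        rw [sum_const, card_erase_of_mem hv, nsmul_eq_mul, Nat.cast_pred hB.card_pos]
        field_simp

namespace Geometry.SimplicialComplex

open Module

variable {E : Type*} [NormedAddCommGroup E] [NormedSpace ℝ E] {K : SimplicialComplex ℝ E}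

theorem isCompact_space (hK : K.faces.Finite) : IsCompact K.space :=
  hK.isCompact_biUnion fun σ _ => σ.finite_toSet.isCompact_convexHull (𝕜 := ℝ)

theorem card_le_finrank_succ [FiniteDimensional ℝ E] {σ : Finset E} (hσ : σ ∈ K.faces) :
    #σ ≤ finrank ℝ E + 1 := by
  have := (K.indep hσ).card_le_finrank_succ
  rw [Fintype.card_coe] at this
  exact this.trans (Nat.add_le_add_right (Submodule.finrank_le _) 1)

theorem diam_le_of_mem_barycentricSubdivision [FiniteDimensional ℝ E] [DecidableEq E] {r : ℝ}
    (hK : ∀ σ ∈ K.faces, diam (σ : Set E) ≤ r) {s : Finset E}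
    (hs : s ∈ K.barycentricSubdivision.faces) :
    diam (s : Set E) ≤ finrank ℝ E / (finrank ℝ E + 1) * r := by
  obtain ⟨c, hc, rfl⟩ := hs
  obtain ⟨M, hM, hMtop⟩ := hc.exists_top
  have hr : 0 ≤ r := diam_nonneg.trans (hK M (hc.subset_faces hM))
  have key : ∀ A ∈ c, ∀ B ∈ c, A ⊆ B →
      dist (A.centroid ℝ id) (B.centroid ℝ id) ≤ finrank ℝ E / (finrank ℝ E + 1) * r := by
    intro A hA B hB hAB
    have hBne := hc.nonempty_of_mem hB
    have hcard : (#B : ℝ) ≤ finrank ℝ E + 1 := by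
      exact_mod_cast card_le_finrank_succ (hc.subset_faces hB)
    calc _ ≤ (1 - (#B : ℝ)⁻¹) * diam (B : Set E) := dist_centroid_le hBne
          (convexHull_mono (coe_subset.2 hAB) (centroid_mem_convexHull A (hc.nonempty_of_mem hA)))
      _ ≤ (1 - ((finrank ℝ E : ℝ) + 1)⁻¹) * r :=
          mul_le_mul (sub_le_sub_left (inv_anti₀ (by exact_mod_cast hBne.card_pos) hcard) 1)
            (hK B (hc.subset_faces hB)) diam_nonneg
            (sub_nonneg.2 (inv_le_one_of_one_le₀ (le_add_of_nonneg_left (Nat.cast_nonneg _))))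
      _ = finrank ℝ E / (finrank ℝ E + 1) * r := by field_simp; ring
  refine diam_le_of_forall_dist_le (by positivity) fun x hx y hy => ?_
  obtain ⟨A, hA, rfl⟩ := mem_image.1 (mem_coe.1 hx)
  obtain ⟨B, hB, rfl⟩ := mem_image.1 (mem_coe.1 hy)
  rcases hc.isChain.total hA hB with h | h
  · exact key A hA B hB h
  · exact dist_comm (B.centroid ℝ id) _ ▸ key B hB A hA h

end Geometry.SimplicialComplex

section Subdivision

variable {n : ℕ}

theorem IsSubdivision.refl (K : SimplicialComplex ℝ (Fin n → ℝ)) : IsSubdivision K K :=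
  ⟨rfl, fun σ hσ => ⟨σ, hσ, subset_rfl⟩⟩

theorem IsSubdivision.trans {K₁ K₂ K₃ : SimplicialComplex ℝ (Fin n → ℝ)}
    (h₁₂ : IsSubdivision K₁ K₂) (h₂₃ : IsSubdivision K₂ K₃) : IsSubdivision K₁ K₃ :=
  ⟨h₁₂.1.trans h₂₃.1, fun σ hσ => by
    obtain ⟨τ, hτ, hστ⟩ := h₁₂.2 σ hσ
    obtain ⟨ρ, hρ, hτρ⟩ := h₂₃.2 τ hτ
    exact ⟨ρ, hρ, hστ.trans hτρ⟩⟩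

theorem isSubdivision_barycentricSubdivision (K : SimplicialComplex ℝ (Fin n → ℝ)) :
    IsSubdivision K.barycentricSubdivision K :=
  ⟨SimplicialComplex.space_barycentricSubdivision,
    fun _ => SimplicialComplex.exists_convexHull_subset_of_mem_barycentricSubdivision⟩

theorem exists_isSubdivision_diam_le (K : SimplicialComplex ℝ (Fin n → ℝ)) (hK : K.faces.Finite)
    {δ : ℝ} (hδ : 0 < δ) :
    ∃ K' : SimplicialComplex ℝ (Fin n → ℝ), IsSubdivision K' K ∧ K'.faces.Finite ∧
      ∀ σ ∈ K'.faces, diam (σ : Set (Fin n → ℝ)) ≤ δ := by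
  set q : ℝ := n / (n + 1)
  set r := diam K.space
  have hiter : ∀ N, IsSubdivision (SimplicialComplex.barycentricSubdivision^[N] K) K ∧
      (SimplicialComplex.barycentricSubdivision^[N] K).faces.Finite ∧
      ∀ σ ∈ (SimplicialComplex.barycentricSubdivision^[N] K).faces,
        diam (σ : Set (Fin n → ℝ)) ≤ q ^ N * r := by
    intro N
    induction N with
    | zero =>
      refine ⟨.refl K, hK, fun σ hσ => ?_⟩
      rw [pow_zero, one_mul]
      exact diam_mono (K.subset_space hσ) (SimplicialComplex.isCompact_space hK).isBounded
    | succ N ih =>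
      rw [Function.iterate_succ_apply']
      refine ⟨(isSubdivision_barycentricSubdivision _).trans ih.1,
        SimplicialComplex.finite_barycentricSubdivision_faces ih.2.1, fun σ hσ => ?_⟩
      have := SimplicialComplex.diam_le_of_mem_barycentricSubdivision ih.2.2 hσ
      rwa [Module.finrank_fin_fun, ← mul_assoc, ← pow_succ'] at this
  obtain ⟨N, hN⟩ : ∃ N, q ^ N * r < δ :=
    (((tendsto_pow_atTop_nhds_zero_of_lt_one (by positivity)
      ((div_lt_one (by positivity)).2 (lt_add_one _))).mul_const r).eventually
        (gt_mem_nhds (by simpa using hδ))).exists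
  exact ⟨_, (hiter N).1, (hiter N).2.1, fun σ hσ => ((hiter N).2.2 σ hσ).trans hN.le⟩

end Subdivision

/-! ### Simplicial approximation -/

namespace Geometry.SimplicialComplex

variable {E F : Type*} [AddCommGroup E] [Module ℝ E] [AddCommGroup F] [Module ℝ F]
  {K : SimplicialComplex ℝ E}

variable (K) in
theorem exists_piecewiseAffine_extension (f : E → F) :
    ∃ Φ : E → F, ∀ σ ∈ K.faces, ∃ A : E →ᵃ[ℝ] F,
      (∀ v ∈ σ, A v = f v) ∧ Set.EqOn Φ A (convexHull ℝ ↑σ) := by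
  have hA : ∀ σ ∈ K.faces, ∃ A : E →ᵃ[ℝ] F, ∀ v ∈ σ, A v = f v := fun σ hσ => by
    obtain ⟨A, hA⟩ := (K.indep hσ).exists_affineMap_eq fun v => f v
    exact ⟨A, fun v hv => hA ⟨v, hv⟩⟩
  classical
  choose! A hAf using hA
  refine ⟨fun x => if hx : x ∈ K.space then A (mem_space_iff.1 hx).choose x else 0,
    fun σ hσ => ⟨A σ, hAf σ hσ, fun x hx => ?_⟩⟩
  have hxK := K.convexHull_subset_space hσ hx
  obtain ⟨hτ, hxτ⟩ := (mem_space_iff.1 hxK).choose_spec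
  simp only [dif_pos hxK]
  exact AffineMap.eqOn_convexHull (fun v hv => (hAf _ hτ v hv.1).trans (hAf σ hσ v hv.2).symm)
    (K.inter_subset_convexHull hτ hσ ⟨hxτ, hx⟩)

theorem exists_minimal_face {x : E} (hx : x ∈ K.space) :
    ∃ μ ∈ K.faces, x ∈ convexHull ℝ ↑μ ∧ ∀ ν ∈ K.faces, x ∈ convexHull ℝ ↑ν → μ ⊆ ν := by
  classical
  obtain ⟨μ, ⟨hμ, hxμ⟩, hmin⟩ := exists_minimal_of_wellFoundedLT
    (fun μ => μ ∈ K.faces ∧ x ∈ convexHull ℝ ↑μ) (mem_space_iff.1 hx)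
  refine ⟨μ, hμ, hxμ, fun ν hν hxν => ?_⟩
  have hx' : x ∈ convexHull ℝ ↑(μ ∩ ν) := by
    rw [coe_inter]
    exact K.inter_subset_convexHull hμ hν ⟨hxμ, hxν⟩
  have hne : (μ ∩ ν).Nonempty := by
    by_contra h
    simp [not_nonempty_iff_eq_empty.1 h] at hx'
  exact (hmin ⟨K.down_closed hμ inter_subset_left hne, hx'⟩ inter_subset_left).trans
    inter_subset_right

/-- The complement of the union of the faces not containing `w`; within `K.space` this is the open
star of `w`, but it also contains every point outside `K.space`. -/
def openStar (K : SimplicialComplex ℝ E) (w : E) : Set E :=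
  {x | ∀ ν ∈ K.faces, x ∈ convexHull ℝ ↑ν → w ∈ ν}

theorem exists_vertex_mem_openStar {x : E} (hx : x ∈ K.space) :
    ∃ w ∈ K.vertices, x ∈ K.openStar w := by
  obtain ⟨μ, hμ, -, hmin⟩ := K.exists_minimal_face hx
  obtain ⟨w, hw⟩ := K.nonempty_of_mem_faces hμ
  exact ⟨w, K.down_closed hμ (singleton_subset_iff.2 hw) (singleton_nonempty w),
    fun ν hν hxν => hmin ν hν hxν hw⟩

theorem isOpen_openStar [TopologicalSpace E] [IsTopologicalAddGroup E] [ContinuousSMul ℝ E]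
    [T2Space E] (hK : K.faces.Finite) (w : E) : IsOpen (K.openStar w) := by
  have : K.openStar w = (⋃ ν ∈ {ν ∈ K.faces | w ∉ ν}, convexHull ℝ (ν : Set E))ᶜ := by
    ext x
    simp only [openStar, Set.mem_ofPred_eq, Set.mem_compl_iff, Set.mem_iUnion, not_exists]
    grind
  rw [this]
  exact ((hK.subset (Set.sep_subset _ _)).isClosed_biUnion fun ν _ =>
    (ν.finite_toSet.isCompact_convexHull (𝕜 := ℝ)).isClosed).isOpen_compl

end Geometry.SimplicialComplex

section SimplicialMap

variable {n m : ℕ}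

theorem IsSimplicialMap.mapsTo_space {K : SimplicialComplex ℝ (Fin n → ℝ)}
    {L : SimplicialComplex ℝ (Fin m → ℝ)} {Φ : (Fin n → ℝ) → (Fin m → ℝ)}
    (hΦ : IsSimplicialMap K L Φ) : Set.MapsTo Φ K.space L.space := fun x hx => by
  obtain ⟨σ, hσ, hxσ⟩ := SimplicialComplex.mem_space_iff.1 hx
  obtain ⟨μ, hμ, hsub⟩ := hΦ.2.2 σ hσ
  exact L.convexHull_subset_space hμ (hsub ⟨x, hxσ, rfl⟩)

theorem exists_isSimplicialMap (K : SimplicialComplex ℝ (Fin n → ℝ))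
    (L : SimplicialComplex ℝ (Fin m → ℝ)) (f : (Fin n → ℝ) → (Fin m → ℝ))
    (hf : ∀ σ ∈ K.faces, σ.image f ∈ L.faces) :
    ∃ Φ, IsSimplicialMap K L Φ ∧
      ∀ σ ∈ K.faces, Φ '' convexHull ℝ ↑σ ⊆ convexHull ℝ ↑(σ.image f) := by
  obtain ⟨Φ, hΦ⟩ := K.exists_piecewiseAffine_extension f
  have himage : ∀ σ ∈ K.faces, Φ '' convexHull ℝ ↑σ = convexHull ℝ ↑(σ.image f) := by
    intro σ hσ
    obtain ⟨A, hAf, hΦA⟩ := hΦ σ hσ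
    rw [hΦA.image_eq, A.image_convexHull, coe_image, Set.image_congr fun v hv => hAf v hv]
  refine ⟨Φ, ⟨fun σ hσ => ?_, fun v hv => ?_, fun σ hσ => ⟨_, hf σ hσ, (himage σ hσ).le⟩⟩,
    fun σ hσ => (himage σ hσ).le⟩
  · obtain ⟨A, -, hΦA⟩ := hΦ σ hσ
    exact ⟨A, hΦA⟩
  · obtain ⟨A, hAf, hΦA⟩ := hΦ {v} hv
    rw [hΦA (subset_convexHull ℝ _ (mem_singleton_self v)), hAf v (mem_singleton_self v)]
    exact SimplicialComplex.mem_vertices.2 (by simpa using hf {v} hv)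

theorem exists_isSimplicialMap_dist_le {K K' : SimplicialComplex ℝ (Fin n → ℝ)}
    (hK' : K'.space = K.space) {L' : SimplicialComplex ℝ (Fin m → ℝ)} {φ : K.space → (Fin m → ℝ)}
    (hφ : ∀ p, φ p ∈ L'.space) {f : (Fin n → ℝ) → (Fin m → ℝ)}
    (hf : ∀ σ ∈ K'.faces, ∀ v ∈ σ, ∀ p : K.space, (p : Fin n → ℝ) ∈ convexHull ℝ ↑σ →
      φ p ∈ L'.openStar (f v))
    {δ : ℝ} (hL'δ : ∀ ν ∈ L'.faces, diam (ν : Set (Fin m → ℝ)) ≤ δ) :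
    ∃ Φ, IsSimplicialMap K' L' Φ ∧ ∀ p : K.space, dist (Φ p) (φ p) ≤ δ := by
  have hsub : ∀ σ ∈ K'.faces, ∀ p : K.space, (p : Fin n → ℝ) ∈ convexHull ℝ ↑σ →
      ∀ ν ∈ L'.faces, φ p ∈ convexHull ℝ ↑ν → σ.image f ⊆ ν := fun σ hσ p hp ν hν hpν =>
    image_subset_iff.2 fun v hv => hf σ hσ v hv p hp ν hν hpν
  have hface : ∀ σ ∈ K'.faces, σ.image f ∈ L'.faces := by
    intro σ hσ
    obtain ⟨v, hv⟩ := K'.nonempty_of_mem_faces hσ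
    have hvK : v ∈ K.space := hK' ▸ K'.subset_space hσ hv
    obtain ⟨ν, hν, hpν⟩ := SimplicialComplex.mem_space_iff.1 (hφ ⟨v, hvK⟩)
    exact L'.down_closed hν (hsub σ hσ ⟨v, hvK⟩ (subset_convexHull ℝ _ hv) ν hν hpν)
      ((K'.nonempty_of_mem_faces hσ).image f)
  obtain ⟨Φ, hΦ, hΦσ⟩ := exists_isSimplicialMap K' L' f hface
  refine ⟨Φ, hΦ, fun p => ?_⟩
  obtain ⟨σ, hσ, hpσ⟩ := SimplicialComplex.mem_space_iff.1 (by rw [hK']; exact p.2)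
  obtain ⟨ν, hν, hpν⟩ := SimplicialComplex.mem_space_iff.1 (hφ p)
  exact (dist_le_diam_of_mem_convexHull (convexHull_mono (coe_subset.2 (hsub σ hσ p hpσ ν hν hpν))
    (hΦσ σ hσ ⟨p, hpσ, rfl⟩)) hpν).trans (hL'δ ν hν)

theorem exists_simplicial_approximation (K : SimplicialComplex ℝ (Fin n → ℝ))
    (hK : K.faces.Finite) (L : SimplicialComplex ℝ (Fin m → ℝ)) (hL : L.faces.Finite)
    (φ : K.space → (Fin m → ℝ)) (hφ : Continuous φ) (hφL : ∀ p, φ p ∈ L.space) {δ : ℝ}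
    (hδ : 0 < δ) :
    ∃ (K' : SimplicialComplex ℝ (Fin n → ℝ)) (L' : SimplicialComplex ℝ (Fin m → ℝ))
      (Φ : (Fin n → ℝ) → (Fin m → ℝ)), IsSubdivision K' K ∧ IsSubdivision L' L ∧
        IsSimplicialMap K' L' Φ ∧ ∀ p : K.space, dist (Φ p) (φ p) ≤ δ := by
  obtain ⟨L', hL'L, hL', hL'δ⟩ := exists_isSubdivision_diam_le L hL hδ
  have hφL' : ∀ p, φ p ∈ L'.space := fun p => hL'L.1 ▸ hφL p
  have : CompactSpace K.space :=
    isCompact_iff_compactSpace.1 (SimplicialComplex.isCompact_space hK)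
  obtain ⟨r, hr, hleb⟩ := lebesgue_number_lemma_of_metric
    (c := fun w => φ ⁻¹' L'.openStar w) isCompact_univ
    (fun w => (SimplicialComplex.isOpen_openStar hL' w).preimage hφ) fun p _ => by
      obtain ⟨w, -, hpw⟩ := L'.exists_vertex_mem_openStar (hφL' p)
      exact Set.mem_iUnion.2 ⟨w, hpw⟩
  obtain ⟨K', hK'K, -, hK'r⟩ := exists_isSubdivision_diam_le K hK (half_pos hr)
  have hvert : ∀ v ∈ K'.vertices, ∃ w,
      ∀ p : K.space, dist (p : Fin n → ℝ) v < r → φ p ∈ L'.openStar w := by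
    intro v hv
    obtain ⟨w, hw⟩ := hleb ⟨v, hK'K.1 ▸ K'.vertices_subset_space hv⟩ trivial
    exact ⟨w, fun p hp => hw (mem_ball.2 hp)⟩
  choose! f hf using hvert
  obtain ⟨Φ, hΦ, hΦφ⟩ := exists_isSimplicialMap_dist_le hK'K.1 hφL' (f := f) (fun σ hσ v hv p hp =>
    hf v (K'.down_closed hσ (singleton_subset_iff.2 hv) (singleton_nonempty v)) p <|
      calc dist (p : Fin n → ℝ) v ≤ diam (σ : Set (Fin n → ℝ)) :=
            dist_le_diam_of_mem_convexHull hp (subset_convexHull ℝ _ hv)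
        _ ≤ r / 2 := hK'r σ hσ
        _ < r := half_lt_self hr) hL'δ
  exact ⟨K', L', Φ, hK'K, hL'L, hΦ, hΦφ⟩

end SimplicialMap

theorem simplicial_approximation_triangulable_general (n m : ℕ)
    (X : Type*) [MetricSpace X]
    (Y : Type*) [MetricSpace Y]
    (K : SimplicialComplex ℝ (Fin n → ℝ)) (hKfin : K.faces.Finite)
    (L : SimplicialComplex ℝ (Fin m → ℝ)) (hLfin : L.faces.Finite)
    (τK : X ≃ₜ K.space) (τL : Y ≃ₜ L.space)
    (g : X → Y) (hg : Continuous g) (ε : ℝ) (hε : 0 < ε) :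
    ∃ (K' : SimplicialComplex ℝ (Fin n → ℝ)) (L' : SimplicialComplex ℝ (Fin m → ℝ))
      (F : (Fin n → ℝ) → (Fin m → ℝ)),
      IsSubdivision K' K ∧ IsSubdivision L' L ∧ IsSimplicialMap K' L' F ∧
      ∃ h : ∀ x : X, F (τK x : Fin n → ℝ) ∈ L.space,
        ∀ x : X, dist (g x) (τL.symm ⟨F (τK x : Fin n → ℝ), h x⟩) ≤ ε := by
  have : CompactSpace L.space :=
    isCompact_iff_compactSpace.1 (SimplicialComplex.isCompact_space hLfin)
  obtain ⟨δ, hδ, hτL⟩ := Metric.uniformContinuous_iff.1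
    (CompactSpace.uniformContinuous_of_continuous τL.symm.continuous) ε hε
  obtain ⟨K', L', F, hK'K, hL'L, hF, hFg⟩ := exists_simplicial_approximation K hKfin L hLfin
    (fun p => τL (g (τK.symm p))) (by fun_prop) (fun p => (τL _).2) (half_pos hδ)
  have hFL : ∀ x, F (τK x) ∈ L.space := fun x =>
    hL'L.1 ▸ hF.mapsTo_space (hK'K.1.symm ▸ (τK x).2)
  refine ⟨K', L', F, hK'K, hL'L, hF, hFL, fun x => ?_⟩
  have hclose : dist (τL (g x)) ⟨F (τK x), hFL x⟩ < δ := by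
    rw [Subtype.dist_eq, dist_comm]
    simpa using (hFg (τK x)).trans_lt (half_lt_self hδ)
  simpa using (hτL hclose).le

/-- Proposition 5.3: a continuous map g between compact metric spaces
homeomorphic to the spaces of finite simplicial complexes K and L can be ε-approximated
by (the pullback of) a simplicial map between subdivisions of K and L. -/
theorem simplicial_approximation_triangulable (n m : ℕ)
    (X : Type*) [MetricSpace X] [CompactSpace X]
    (Y : Type*) [MetricSpace Y] [CompactSpace Y]
    (K : SimplicialComplex ℝ (Fin n → ℝ)) (hKfin : K.faces.Finite)
    (L : SimplicialComplex ℝ (Fin m → ℝ)) (hLfin : L.faces.Finite)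
    (τK : X ≃ₜ K.space) (τL : Y ≃ₜ L.space)
    (g : X → Y) (hg : Continuous g) (ε : ℝ) (hε : 0 < ε) :
    ∃ (K' : SimplicialComplex ℝ (Fin n → ℝ)) (L' : SimplicialComplex ℝ (Fin m → ℝ))
      (F : (Fin n → ℝ) → (Fin m → ℝ)),
      IsSubdivision K' K ∧ IsSubdivision L' L ∧ IsSimplicialMap K' L' F ∧
      ∃ h : ∀ x : X, F (τK x : Fin n → ℝ) ∈ L.space,
        ∀ x : X, dist (g x) (τL.symm ⟨F (τK x : Fin n → ℝ), h x⟩) ≤ ε :=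
  simplicial_approximation_triangulable_general n m X Y K hKfin L hLfin τK τL g hg ε hε
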